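/- Let N ≥ 2 be an integer, T > 0, and let u be a classical solution of problem (P) on [0,1]×[0,T] with initial data u0 ∈ C([0,1]) satisfying 0 < m0 ≤ u0(r) ≤ M0 for all r ∈ [0,1]. Then for all r ∈ [0,1] and t ∈ [0,T], m0 e^{(r^2-1)/2 + (N-1)t} ≤ u(r,t) ≤ max(M0,1) e^{r^2/2 + Nt}. In particular there are constants C1, C2 > 0 depending only on u0 with C1 e^{(N-1)t} ≤ u(r,t) ≤ C2 e^{Nt} on [0,1]×[0,T]. -/

import Mathlib

/-!
Both bounds come from comparison with explicit barriers. The function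
`Φ = c e^{r²/2 + κt}` has `Φ_r = rΦ` and `Φ_rr = (1 + r²)Φ`; it is a subsolution of (P) for
`κ = N - 1` (the curvature term is nonnegative) and, when `Φ ≥ 1`, a supersolution for `κ = N`
(the curvature term is then at most `Φ`). In both cases the boundary conditions hold with
equality, so the barriers are perturbed by `∓ ε e^{λt} (2r² - r + 1)`, which makes the boundary
conditions and, for `λ` large, the equation strict. A strict sub- or supersolution cannot touch
the solution for the first time at any point of the parabolic boundary or interior, and letting
`ε → 0` gives the bounds.
-/

open Set Filter Topology Real

/-- A classical solution of problem (P) on `[0,1] × [0,T]`: the radially symmetric mean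
curvature flow `u_t = u_rr/(1+u_r^2) + ((N-1)/r) u_r` on `(0,1) × (0,T]` with Robin boundary
conditions `u_r(0,t) = 0`, `u_r(1,t) = u(1,t)` for `t ∈ (0,T]` and initial data `u0`. -/
def IsClassicalSolutionOn (N : ℕ) (T : ℝ) (u ur urr ut : ℝ → ℝ → ℝ) (u0 : ℝ → ℝ) : Prop :=
  ContinuousOn (fun p : ℝ × ℝ => u p.1 p.2) (Icc 0 1 ×ˢ Icc 0 T) ∧
  ContinuousOn (fun p : ℝ × ℝ => ur p.1 p.2) (Icc 0 1 ×ˢ Ioc 0 T) ∧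
  ContinuousOn (fun p : ℝ × ℝ => urr p.1 p.2) (Icc 0 1 ×ˢ Ioc 0 T) ∧
  ContinuousOn (fun p : ℝ × ℝ => ut p.1 p.2) (Icc 0 1 ×ˢ Ioc 0 T) ∧
  (∀ t ∈ Ioc (0:ℝ) T, ∀ r ∈ Icc (0:ℝ) 1, HasDerivWithinAt (fun s => u s t) (ur r t) (Icc 0 1) r) ∧
  (∀ t ∈ Ioc (0:ℝ) T, ∀ r ∈ Icc (0:ℝ) 1, HasDerivWithinAt (fun s => ur s t) (urr r t) (Icc 0 1) r) ∧
  (∀ t ∈ Ioc (0:ℝ) T, ∀ r ∈ Icc (0:ℝ) 1, HasDerivWithinAt (fun tau => u r tau) (ut r t) (Icc 0 T) t) ∧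
  (∀ t ∈ Ioc (0:ℝ) T, ∀ r ∈ Ioo (0:ℝ) 1,
    ut r t = urr r t / (1 + (ur r t) ^ 2) + (((N : ℝ) - 1) / r) * ur r t) ∧
  (∀ t ∈ Ioc (0:ℝ) T, ur 0 t = 0) ∧
  (∀ t ∈ Ioc (0:ℝ) T, ur 1 t = u 1 t) ∧
  (∀ r ∈ Icc (0:ℝ) 1, u r 0 = u0 r)

namespace IsMinOn

variable {f f' : ℝ → ℝ} {a b x d d' : ℝ}

theorem nonneg_of_hasDerivWithinAt_Icc_left (hab : a < b) (hmin : IsMinOn f (Icc a b) a)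
    (hf : HasDerivWithinAt f d (Icc a b) a) : 0 ≤ d := by
  have hcone : b - a ∈ posTangentConeAt (Icc a b) a :=
    sub_mem_posTangentConeAt_of_segment_subset (segment_eq_Icc hab.le).subset
  have := hmin.localize.hasFDerivWithinAt_nonneg hf.hasFDerivWithinAt hcone
  rw [ContinuousLinearMap.toSpanSingleton_apply, smul_eq_mul] at this
  exact nonneg_of_mul_nonneg_right this (sub_pos.2 hab)

theorem nonpos_of_hasDerivWithinAt_Icc_right (hab : a < b) (hmin : IsMinOn f (Icc a b) b)
    (hf : HasDerivWithinAt f d (Icc a b) b) : d ≤ 0 := by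
  have hcone : a - b ∈ posTangentConeAt (Icc a b) b :=
    sub_mem_posTangentConeAt_of_segment_subset (by rw [segment_symm, segment_eq_Icc hab.le])
  have := hmin.localize.hasFDerivWithinAt_nonneg hf.hasFDerivWithinAt hcone
  rw [ContinuousLinearMap.toSpanSingleton_apply, smul_eq_mul] at this
  exact nonpos_of_mul_nonneg_right this (sub_neg.2 hab)

theorem eq_zero_of_hasDerivWithinAt_Icc (hx : x ∈ Ioo a b) (hmin : IsMinOn f (Icc a b) x)
    (hf : HasDerivWithinAt f d (Icc a b) x) : d = 0 :=
  (hmin.isLocalMin (Icc_mem_nhds hx.1 hx.2)).hasDerivAt_eq_zero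
    (hf.hasDerivAt (Icc_mem_nhds hx.1 hx.2))

theorem nonneg_of_hasDerivWithinAt_deriv_Icc (hx : x ∈ Ioo a b) (hmin : IsMinOn f (Icc a b) x)
    (hf : ∀ y ∈ Icc a b, HasDerivWithinAt f (f' y) (Icc a b) y)
    (hf' : HasDerivWithinAt f' d' (Icc a b) x) : 0 ≤ d' := by
  by_contra! hneg
  have hzero : f' x = 0 :=
    hmin.eq_zero_of_hasDerivWithinAt_Icc hx (hf x (Ioo_subset_Icc_self hx))
  have hslope : Tendsto (slope f' x) (𝓝[>] x) (𝓝 d') :=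
    (hasDerivWithinAt_iff_tendsto_slope' (lt_irrefl x)).1
      ((hf'.hasDerivAt (Icc_mem_nhds hx.1 hx.2)).hasDerivWithinAt)
  have hev : ∀ᶠ y in 𝓝[>] x, f' y < 0 ∧ y < b := by
    filter_upwards [hslope.eventually (eventually_lt_nhds hneg), self_mem_nhdsWithin,
      nhdsWithin_le_nhds (eventually_lt_nhds hx.2)] with y hy hxy hyb
    exact ⟨by simpa [hzero] using (slope_neg_iff_of_le (le_of_lt hxy)).1 hy, hyb⟩
  obtain ⟨c, hxc, hsub⟩ := mem_nhdsGT_iff_exists_Ioo_subset.1 hev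
  have hcb : c ≤ b := le_of_not_gt fun hbc => (hsub ⟨hx.2, hbc⟩).2.false
  have hIcc : Icc x c ⊆ Icc a b := Icc_subset_Icc hx.1.le hcb
  have hanti : StrictAntiOn f (Icc x c) := by
    refine strictAntiOn_of_hasDerivWithinAt_neg (convex_Icc x c)
      (fun y hy => ((hf y (hIcc hy)).continuousWithinAt).mono hIcc) (f' := f') ?_ ?_
    · rw [interior_Icc]
      exact fun y hy =>
        (hf y (hIcc (Ioo_subset_Icc_self hy))).mono (Ioo_subset_Icc_self.trans hIcc)
    · rw [interior_Icc]
      exact fun y hy => (hsub hy).1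
  exact (hanti (left_mem_Icc.2 hxc.le) (right_mem_Icc.2 hxc.le) hxc).not_ge
    (hmin (hIcc (right_mem_Icc.2 hxc.le)))

end IsMinOn

structure HasParabolicDerivsOn (a b T : ℝ) (w wr wrr wt : ℝ → ℝ → ℝ) : Prop where
  continuousOn : ContinuousOn (fun p : ℝ × ℝ => w p.1 p.2) (Icc a b ×ˢ Icc 0 T)
  hasDerivWithinAt_r : ∀ t ∈ Ioc 0 T, ∀ r ∈ Icc a b,
    HasDerivWithinAt (fun s => w s t) (wr r t) (Icc a b) r
  hasDerivWithinAt_rr : ∀ t ∈ Ioc 0 T, ∀ r ∈ Icc a b,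
    HasDerivWithinAt (fun s => wr s t) (wrr r t) (Icc a b) r
  hasDerivWithinAt_t : ∀ t ∈ Ioc 0 T, ∀ r ∈ Icc a b,
    HasDerivWithinAt (fun τ => w r τ) (wt r t) (Icc 0 T) t

theorem exists_first_zero {a b T : ℝ} {w : ℝ → ℝ → ℝ}
    (hw : ContinuousOn (fun p : ℝ × ℝ => w p.1 p.2) (Icc a b ×ˢ Icc 0 T))
    (h0 : ∀ r ∈ Icc a b, 0 < w r 0) (hneg : ∃ r ∈ Icc a b, ∃ t ∈ Icc 0 T, w r t ≤ 0) :
    ∃ t₀ ∈ Ioc 0 T, ∃ r₀ ∈ Icc a b, w r₀ t₀ = 0 ∧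
      ∀ r ∈ Icc a b, ∀ t ∈ Icc 0 t₀, 0 ≤ w r t := by
  obtain ⟨r₁, hr₁, t₁, ht₁, hw₁⟩ := hneg
  set K := Icc a b ×ˢ Icc 0 T ∩ (fun p : ℝ × ℝ => w p.1 p.2) ⁻¹' Iic 0
  have hK : IsCompact K := (isCompact_Icc.prod isCompact_Icc).of_isClosed_subset
    (hw.preimage_isClosed_of_isClosed (isClosed_Icc.prod isClosed_Icc) isClosed_Iic)
    inter_subset_left
  obtain ⟨⟨r₀, t₀⟩, ⟨⟨hr₀, ht₀⟩, hw₀⟩, hmin⟩ :=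
    hK.exists_isMinOn ⟨(r₁, t₁), ⟨hr₁, ht₁⟩, hw₁⟩ continuous_snd.continuousOn
  have hbefore : ∀ r ∈ Icc a b, ∀ t ∈ Icc 0 T, t < t₀ → 0 < w r t :=
    fun r hr t ht hlt => lt_of_not_ge fun h =>
      (isMinOn_iff.1 hmin (r, t) ⟨⟨hr, ht⟩, h⟩).not_gt hlt
  have ht₀pos : 0 < t₀ := ht₀.1.lt_of_ne fun h => (h0 r₀ hr₀).not_ge (h ▸ hw₀)
  have hslab : ∀ r ∈ Icc a b, ∀ t ∈ Icc 0 t₀, 0 ≤ w r t := by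
    intro r hr t ht
    rcases ht.2.lt_or_eq with hlt | rfl
    · exact (hbefore r hr t ⟨ht.1, hlt.le.trans ht₀.2⟩ hlt).le
    by_contra! hwt
    -- a zero of `w r ·` strictly before `t` would contradict the minimality of `t`
    have hcont : ContinuousOn (fun τ => w r τ) (Icc 0 t) :=
      hw.comp (continuous_const.prodMk continuous_id).continuousOn
        fun τ hτ => ⟨hr, hτ.1, hτ.2.trans ht₀.2⟩
    obtain ⟨τ, hτ, hτ0⟩ := intermediate_value_Ioo' ht.1 hcont ⟨hwt, h0 r hr⟩
    exact (hbefore r hr τ ⟨hτ.1.le, hτ.2.le.trans ht₀.2⟩ hτ.2).ne' hτ0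
  exact ⟨t₀, ⟨ht₀pos, ht₀.2⟩, r₀, hr₀, hw₀.antisymm (hslab r₀ hr₀ t₀ ⟨ht₀.1, le_rfl⟩),
    hslab⟩

namespace HasParabolicDerivsOn

variable {a b T : ℝ} {v vr vrr vt w wr wrr wt : ℝ → ℝ → ℝ}

theorem sub (hv : HasParabolicDerivsOn a b T v vr vrr vt)
    (hw : HasParabolicDerivsOn a b T w wr wrr wt) :
    HasParabolicDerivsOn a b T (fun r t => v r t - w r t) (fun r t => vr r t - wr r t)
      (fun r t => vrr r t - wrr r t) (fun r t => vt r t - wt r t) where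
  continuousOn := hv.continuousOn.sub hw.continuousOn
  hasDerivWithinAt_r t ht r hr :=
    (hv.hasDerivWithinAt_r t ht r hr).sub (hw.hasDerivWithinAt_r t ht r hr)
  hasDerivWithinAt_rr t ht r hr :=
    (hv.hasDerivWithinAt_rr t ht r hr).sub (hw.hasDerivWithinAt_rr t ht r hr)
  hasDerivWithinAt_t t ht r hr :=
    (hv.hasDerivWithinAt_t t ht r hr).sub (hw.hasDerivWithinAt_t t ht r hr)

theorem minimum_principle (hw : HasParabolicDerivsOn a b T w wr wrr wt) (hab : a < b)
    (h0 : ∀ r ∈ Icc a b, 0 < w r 0)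
    (ha : ∀ t ∈ Ioc 0 T, w a t = 0 → wr a t < 0)
    (hb : ∀ t ∈ Ioc 0 T, w b t = 0 → 0 < wr b t)
    (hint : ∀ t ∈ Ioc 0 T, ∀ r ∈ Ioo a b,
      w r t = 0 → wr r t = 0 → 0 ≤ wrr r t → 0 < wt r t) :
    ∀ r ∈ Icc a b, ∀ t ∈ Icc 0 T, 0 < w r t := by
  by_contra! hneg
  obtain ⟨t₀, ht₀, r₀, hr₀, hzero, hslab⟩ := exists_first_zero hw.continuousOn h0 hneg
  have hmin_r : IsMinOn (fun s => w s t₀) (Icc a b) r₀ :=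
    isMinOn_iff.2 fun r hr => hzero ▸ hslab r hr t₀ ⟨ht₀.1.le, le_rfl⟩
  have hmin_t : IsMinOn (fun τ => w r₀ τ) (Icc 0 t₀) t₀ :=
    isMinOn_iff.2 fun t ht => hzero ▸ hslab r₀ hr₀ t ht
  have hwt : wt r₀ t₀ ≤ 0 := hmin_t.nonpos_of_hasDerivWithinAt_Icc_right ht₀.1
    ((hw.hasDerivWithinAt_t t₀ ht₀ r₀ hr₀).mono (Icc_subset_Icc_right ht₀.2))
  rcases hr₀.1.eq_or_lt with rfl | har₀
  · exact (ha t₀ ht₀ hzero).not_ge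
      (hmin_r.nonneg_of_hasDerivWithinAt_Icc_left hab (hw.hasDerivWithinAt_r t₀ ht₀ _ hr₀))
  rcases hr₀.2.eq_or_lt with rfl | hr₀b
  · exact (hb t₀ ht₀ hzero).not_ge
      (hmin_r.nonpos_of_hasDerivWithinAt_Icc_right hab (hw.hasDerivWithinAt_r t₀ ht₀ _ hr₀))
  have hr₀' : r₀ ∈ Ioo a b := ⟨har₀, hr₀b⟩
  exact (hint t₀ ht₀ r₀ hr₀' hzero
    (hmin_r.eq_zero_of_hasDerivWithinAt_Icc hr₀' (hw.hasDerivWithinAt_r t₀ ht₀ r₀ hr₀))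
    (hmin_r.nonneg_of_hasDerivWithinAt_deriv_Icc hr₀' (hw.hasDerivWithinAt_r t₀ ht₀)
      (hw.hasDerivWithinAt_rr t₀ ht₀ r₀ hr₀))).not_ge hwt

end HasParabolicDerivsOn

structure IsStrictSubsolutionOn (N : ℕ) (T : ℝ) (v vr vrr vt : ℝ → ℝ → ℝ) : Prop where
  hasParabolicDerivsOn : HasParabolicDerivsOn 0 1 T v vr vrr vt
  neumann : ∀ t ∈ Ioc (0:ℝ) T, 0 < vr 0 t
  robin : ∀ t ∈ Ioc (0:ℝ) T, vr 1 t < v 1 t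
  pde : ∀ t ∈ Ioc (0:ℝ) T, ∀ r ∈ Ioo (0:ℝ) 1,
    vt r t < vrr r t / (1 + vr r t ^ 2) + (((N : ℝ) - 1) / r) * vr r t

structure IsStrictSupersolutionOn (N : ℕ) (T : ℝ) (w wr wrr wt : ℝ → ℝ → ℝ) : Prop where
  hasParabolicDerivsOn : HasParabolicDerivsOn 0 1 T w wr wrr wt
  neumann : ∀ t ∈ Ioc (0:ℝ) T, wr 0 t < 0
  robin : ∀ t ∈ Ioc (0:ℝ) T, w 1 t < wr 1 t
  pde : ∀ t ∈ Ioc (0:ℝ) T, ∀ r ∈ Ioo (0:ℝ) 1,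
    wrr r t / (1 + wr r t ^ 2) + (((N : ℝ) - 1) / r) * wr r t < wt r t

namespace IsClassicalSolutionOn

variable {N : ℕ} {T : ℝ} {u ur urr ut : ℝ → ℝ → ℝ} {u0 : ℝ → ℝ}

theorem hasParabolicDerivsOn (hu : IsClassicalSolutionOn N T u ur urr ut u0) :
    HasParabolicDerivsOn 0 1 T u ur urr ut :=
  ⟨hu.1, hu.2.2.2.2.1, hu.2.2.2.2.2.1, hu.2.2.2.2.2.2.1⟩

theorem lt_of_isStrictSubsolutionOn (hu : IsClassicalSolutionOn N T u ur urr ut u0)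
    {v vr vrr vt : ℝ → ℝ → ℝ} (hv : IsStrictSubsolutionOn N T v vr vrr vt)
    (h0 : ∀ r ∈ Icc (0:ℝ) 1, v r 0 < u0 r) :
    ∀ r ∈ Icc (0:ℝ) 1, ∀ t ∈ Icc 0 T, v r t < u r t := by
  have hreg := hu.hasParabolicDerivsOn.sub hv.hasParabolicDerivsOn
  obtain ⟨-, -, -, -, -, -, -, hpde, hneumann, hrobin, hinit⟩ := hu
  have hpos : ∀ r ∈ Icc (0:ℝ) 1, ∀ t ∈ Icc 0 T, 0 < u r t - v r t := by
    refine hreg.minimum_principle zero_lt_one ?_ ?_ ?_ ?_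
    · intro r hr
      simpa [hinit r hr] using h0 r hr
    · intro t ht _
      simpa [hneumann t ht] using hv.neumann t ht
    · intro t ht hzero
      linarith [hrobin t ht, hv.robin t ht]
    · intro t ht r hr _ hvr hvrr
      rw [sub_pos, hpde t ht r hr, sub_eq_zero.1 hvr]
      calc vt r t < vrr r t / (1 + vr r t ^ 2) + ((N - 1) / r) * vr r t := hv.pde t ht r hr
        _ ≤ urr r t / (1 + vr r t ^ 2) + ((N - 1) / r) * vr r t := by
          gcongr
          linarith
  exact fun r hr t ht => sub_pos.1 (hpos r hr t ht)

theorem lt_of_isStrictSupersolutionOn (hu : IsClassicalSolutionOn N T u ur urr ut u0)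
    {w wr wrr wt : ℝ → ℝ → ℝ} (hw : IsStrictSupersolutionOn N T w wr wrr wt)
    (h0 : ∀ r ∈ Icc (0:ℝ) 1, u0 r < w r 0) :
    ∀ r ∈ Icc (0:ℝ) 1, ∀ t ∈ Icc 0 T, u r t < w r t := by
  have hreg := hw.hasParabolicDerivsOn.sub hu.hasParabolicDerivsOn
  obtain ⟨-, -, -, -, -, -, -, hpde, hneumann, hrobin, hinit⟩ := hu
  have hpos : ∀ r ∈ Icc (0:ℝ) 1, ∀ t ∈ Icc 0 T, 0 < w r t - u r t := by
    refine hreg.minimum_principle zero_lt_one ?_ ?_ ?_ ?_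
    · intro r hr
      simpa [hinit r hr] using h0 r hr
    · intro t ht _
      simpa [hneumann t ht] using hw.neumann t ht
    · intro t ht hzero
      linarith [hrobin t ht, hw.robin t ht]
    · intro t ht r hr _ hwr hwrr
      rw [sub_pos, hpde t ht r hr, ← sub_eq_zero.1 hwr]
      calc urr r t / (1 + wr r t ^ 2) + ((N - 1) / r) * wr r t
          ≤ wrr r t / (1 + wr r t ^ 2) + ((N - 1) / r) * wr r t := by
            gcongr
            linarith
        _ < wt r t := hw.pde t ht r hr
  exact fun r hr t ht => sub_pos.1 (hpos r hr t ht)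

end IsClassicalSolutionOn

theorem half_le_two_mul_sq_sub_add_one (r : ℝ) : 1 / 2 ≤ 2 * r ^ 2 - r + 1 := by
  nlinarith [sq_nonneg (r - 1 / 4)]

theorem one_div_one_add_sq_le (x y : ℝ) : 1 / (1 + x ^ 2) ≤ 1 / (1 + y ^ 2) + |x - y| := by
  have hsum : |y + x| ≤ (1 + x ^ 2) * (1 + y ^ 2) := by
    nlinarith [abs_add_le y x, abs_nonneg x, abs_nonneg y, sq_abs x, sq_abs y,
      sq_nonneg (|x| - 1), sq_nonneg (|y| - 1), mul_nonneg (sq_nonneg x) (sq_nonneg y)]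
  have hdiff : 1 / (1 + x ^ 2) - 1 / (1 + y ^ 2) =
      (y - x) * (y + x) / ((1 + x ^ 2) * (1 + y ^ 2)) := by
    field_simp
    ring
  rw [← sub_le_iff_le_add', hdiff, div_le_iff₀ (by positivity)]
  calc (y - x) * (y + x) ≤ |(y - x) * (y + x)| := le_abs_self _
    _ = |x - y| * |y + x| := by rw [abs_mul, abs_sub_comm]
    _ ≤ |x - y| * ((1 + x ^ 2) * (1 + y ^ 2)) := by gcongr

theorem barrier_subsolution_ineq {N r Φ δ lam : ℝ} (hN : 1 ≤ N) (hr : r ∈ Ioo (0:ℝ) 1)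
    (hΦ : 0 ≤ Φ) (hδ : δ < 0) (hlam : 8 * N < lam) :
    (N - 1) * Φ + lam * (δ * (2 * r ^ 2 - r + 1)) <
      ((1 + r ^ 2) * Φ + δ * 4) / (1 + (r * Φ + δ * (4 * r - 1)) ^ 2) +
        ((N - 1) / r) * (r * Φ + δ * (4 * r - 1)) := by
  have hq := half_le_two_mul_sq_sub_add_one r
  have hfirst : δ * 4 ≤ ((1 + r ^ 2) * Φ + δ * 4) / (1 + (r * Φ + δ * (4 * r - 1)) ^ 2) := by
    rw [le_div_iff₀ (by positivity)]
    nlinarith [sq_nonneg (r * Φ + δ * (4 * r - 1)), mul_nonneg (sq_nonneg r) hΦ]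
  have hsecond : ((N - 1) / r) * (r * Φ + δ * (4 * r - 1)) =
      (N - 1) * Φ + 4 * (N - 1) * δ + (N - 1) * -δ / r := by
    field_simp [hr.1.ne']
    ring
  have hrest : 0 ≤ (N - 1) * -δ / r := div_nonneg (by nlinarith) hr.1.le
  nlinarith [mul_pos (neg_pos.2 hδ) (by nlinarith : 0 < lam * (2 * r ^ 2 - r + 1) - 4 * N)]

theorem barrier_supersolution_ineq {N r Φ δ lam : ℝ} (hN : 1 ≤ N) (hr : r ∈ Ioo (0:ℝ) 1)
    (hΦ : 1 ≤ Φ) (hδ : 0 < δ) (hlam : 12 * Φ + 8 * N < lam) :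
    ((1 + r ^ 2) * Φ + δ * 4) / (1 + (r * Φ + δ * (4 * r - 1)) ^ 2) +
        ((N - 1) / r) * (r * Φ + δ * (4 * r - 1)) <
      N * Φ + lam * (δ * (2 * r ^ 2 - r + 1)) := by
  have hq := half_le_two_mul_sq_sub_add_one r
  set x := r * Φ + δ * (4 * r - 1)
  have hlip : 1 / (1 + x ^ 2) ≤ 1 / (1 + (r * Φ) ^ 2) + 3 * δ := by
    have h := one_div_one_add_sq_le x (r * Φ)
    have : |x - r * Φ| ≤ 3 * δ := by
      rw [show x - r * Φ = δ * (4 * r - 1) by ring, abs_le]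
      constructor <;> nlinarith [hr.1, hr.2]
    linarith
  have hflat : (1 + r ^ 2) * Φ * (1 / (1 + (r * Φ) ^ 2)) ≤ Φ := by
    rw [mul_one_div, div_le_iff₀ (by positivity)]
    nlinarith [mul_nonneg (sq_nonneg r)
      (mul_nonneg (by linarith : (0:ℝ) ≤ Φ - 1) (by linarith : (0:ℝ) ≤ Φ))]
  have hfirst : ((1 + r ^ 2) * Φ + δ * 4) / (1 + x ^ 2) ≤ Φ + 6 * Φ * δ + 4 * δ := by
    have hd : 1 / (1 + x ^ 2) ≤ 1 := by
      rw [div_le_one (by positivity)]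
      nlinarith [sq_nonneg x]
    have hcoef : 0 ≤ (1 + r ^ 2) * Φ := by positivity
    have h3 : (1 + r ^ 2) * Φ * (3 * δ) ≤ 6 * Φ * δ := by
      nlinarith [mul_nonneg (mul_nonneg (by linarith : (0:ℝ) ≤ Φ) hδ.le)
        (by nlinarith [hr.1, hr.2] : (0:ℝ) ≤ 1 - r ^ 2)]
    rw [add_div, div_eq_mul_one_div ((1 + r ^ 2) * Φ), div_eq_mul_one_div (δ * 4)]
    nlinarith [mul_le_mul_of_nonneg_left hlip hcoef,
      mul_le_mul_of_nonneg_left hd (by linarith : 0 ≤ δ * 4)]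
  have hsecond : ((N - 1) / r) * x = (N - 1) * Φ + 4 * (N - 1) * δ - (N - 1) * δ / r := by
    simp only [x]
    field_simp [hr.1.ne']
    ring
  have hrest : 0 ≤ (N - 1) * δ / r := div_nonneg (by nlinarith) hr.1.le
  nlinarith [mul_pos hδ (by nlinarith : 0 < lam * (2 * r ^ 2 - r + 1) - 6 * Φ - 4 * N)]

/-- The corrector `e^{λt} (2r² - r + 1)` has slope `-1` at `r = 0` and slope exceeding its value
by `e^{λt}` at `r = 1`; this is what makes the boundary conditions strict. -/
noncomputable def barrier (c κ lam σ : ℝ) (r t : ℝ) : ℝ :=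
  c * exp (r ^ 2 / 2 + κ * t) + σ * exp (lam * t) * (2 * r ^ 2 - r + 1)

theorem hasDerivAt_mul_exp_sq_div_two_add (c k r : ℝ) :
    HasDerivAt (fun s => c * exp (s ^ 2 / 2 + k)) (r * (c * exp (r ^ 2 / 2 + k))) r := by
  refine ((((hasDerivAt_pow 2 r).div_const 2).add_const k).exp.const_mul c).congr_deriv ?_
  push_cast
  ring

theorem hasParabolicDerivsOn_barrier (a b T c κ lam σ : ℝ) :
    HasParabolicDerivsOn a b T (barrier c κ lam σ)
      (fun r t => r * (c * exp (r ^ 2 / 2 + κ * t)) + σ * exp (lam * t) * (4 * r - 1))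
      (fun r t => (1 + r ^ 2) * (c * exp (r ^ 2 / 2 + κ * t)) + σ * exp (lam * t) * 4)
      (fun r t => κ * (c * exp (r ^ 2 / 2 + κ * t)) +
        lam * (σ * exp (lam * t) * (2 * r ^ 2 - r + 1))) where
  continuousOn := by
    unfold barrier
    fun_prop
  hasDerivWithinAt_r t _ r _ := by
    have hq : HasDerivAt (fun s => 2 * s ^ 2 - s + 1) (4 * r - 1) r := by
      refine ((((hasDerivAt_pow 2 r).const_mul 2).sub (hasDerivAt_id' r)).add_const 1).congr_deriv
        ?_
      push_cast
      ring
    exact ((hasDerivAt_mul_exp_sq_div_two_add c (κ * t) r).add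
      (hq.const_mul (σ * exp (lam * t)))).hasDerivWithinAt
  hasDerivWithinAt_rr t _ r _ := by
    have h := ((hasDerivAt_id' r).mul (hasDerivAt_mul_exp_sq_div_two_add c (κ * t) r)).add
      ((((hasDerivAt_id' r).const_mul 4).sub_const 1).const_mul (σ * exp (lam * t)))
    exact (h.congr_deriv (by ring)).hasDerivWithinAt
  hasDerivWithinAt_t t _ r _ := by
    have h := ((((hasDerivAt_id' t).const_mul κ).const_add (r ^ 2 / 2)).exp.const_mul c).add
      ((((hasDerivAt_id' t).const_mul lam).exp.const_mul σ).mul_const (2 * r ^ 2 - r + 1))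
    exact (h.congr_deriv (by ring)).hasDerivWithinAt

theorem isStrictSubsolutionOn_barrier {N : ℕ} {T c lam σ : ℝ} (hN : 1 ≤ N) (hc : 0 ≤ c)
    (hσ : σ < 0) (hlam : 8 * N < lam) :
    ∃ vr vrr vt, IsStrictSubsolutionOn N T (barrier c (N - 1) lam σ) vr vrr vt := by
  refine ⟨_, _, _, hasParabolicDerivsOn_barrier 0 1 T c (N - 1) lam σ, fun t _ => ?_,
    fun t _ => ?_, fun t _ r hr => ?_⟩
  · nlinarith [exp_pos (lam * t)]
  · simp only [barrier]
    nlinarith [exp_pos (lam * t)]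
  · exact barrier_subsolution_ineq (by exact_mod_cast hN) hr (by positivity)
      (mul_neg_of_neg_of_pos hσ (exp_pos _)) hlam

theorem isStrictSupersolutionOn_barrier {N : ℕ} {T c lam σ : ℝ} (hN : 1 ≤ N) (hc : 1 ≤ c)
    (hσ : 0 < σ) (hlam : 12 * (c * exp (1 / 2 + N * T)) + 8 * N < lam) :
    ∃ wr wrr wt, IsStrictSupersolutionOn N T (barrier c N lam σ) wr wrr wt := by
  refine ⟨_, _, _, hasParabolicDerivsOn_barrier 0 1 T c N lam σ, fun t _ => ?_,
    fun t _ => ?_, fun t ht r hr => ?_⟩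
  · nlinarith [exp_pos (lam * t)]
  · simp only [barrier]
    nlinarith [exp_pos (lam * t)]
  · have hexp : 0 ≤ r ^ 2 / 2 + N * t := by have := ht.1; positivity
    have hΦ : 1 ≤ c * exp (r ^ 2 / 2 + N * t) :=
      one_le_mul_of_one_le_of_one_le hc (one_le_exp hexp)
    have hΦmax : c * exp (r ^ 2 / 2 + N * t) ≤ c * exp (1 / 2 + N * T) := by
      gcongr
      · nlinarith [hr.1, hr.2]
      · exact ht.2
    exact barrier_supersolution_ineq (by exact_mod_cast hN) hr hΦ (mul_pos hσ (exp_pos _))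
      (by linarith)

theorem le_of_forall_pos_lt_add_mul {a b c : ℝ} (hc : 0 < c) (h : ∀ ε > 0, a < b + ε * c) :
    a ≤ b :=
  le_of_forall_pos_lt_add fun ε hε => by
    simpa [div_mul_cancel₀ ε hc.ne'] using h (ε / c) (div_pos hε hc)

namespace IsClassicalSolutionOn

variable {N : ℕ} {T : ℝ} {u ur urr ut : ℝ → ℝ → ℝ} {u0 : ℝ → ℝ}

theorem lower_bound (hu : IsClassicalSolutionOn N T u ur urr ut u0) (hN : 1 ≤ N) {m0 : ℝ}
    (hm0 : 0 ≤ m0) (hu0 : ∀ r ∈ Icc (0:ℝ) 1, m0 ≤ u0 r) :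
    ∀ r ∈ Icc (0:ℝ) 1, ∀ t ∈ Icc 0 T,
      m0 * exp ((r ^ 2 - 1) / 2 + ((N : ℝ) - 1) * t) ≤ u r t := by
  set c := m0 * exp (-1 / 2)
  have hΦ : ∀ r t : ℝ, m0 * exp ((r ^ 2 - 1) / 2 + ((N : ℝ) - 1) * t) =
      c * exp (r ^ 2 / 2 + ((N : ℝ) - 1) * t) := by
    intro r t
    rw [mul_assoc, ← exp_add]
    ring_nf
  have hbelow : ∀ ε > 0, ∀ r ∈ Icc (0:ℝ) 1, ∀ t ∈ Icc 0 T,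
      barrier c (N - 1) (8 * N + 1) (-ε) r t < u r t := by
    intro ε hε
    obtain ⟨vr, vrr, vt, hv⟩ := isStrictSubsolutionOn_barrier (T := T) (c := c) hN
      (by positivity) (neg_neg_of_pos hε) (lt_add_one _)
    refine hu.lt_of_isStrictSubsolutionOn hv fun r hr => ?_
    have hinit : c * exp (r ^ 2 / 2 + ((N : ℝ) - 1) * 0) ≤ m0 := by
      rw [← hΦ]
      exact mul_le_of_le_one_right hm0 (exp_le_one_iff.2 (by nlinarith [hr.1, hr.2]))
    simp only [barrier, mul_zero, exp_zero, mul_one] at hinit ⊢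
    nlinarith [hu0 r hr, half_le_two_mul_sq_sub_add_one r]
  intro r hr t ht
  rw [hΦ]
  refine le_of_forall_pos_lt_add_mul (c := exp ((8 * N + 1) * t) * (2 * r ^ 2 - r + 1))
    (mul_pos (exp_pos _) (by linarith [half_le_two_mul_sq_sub_add_one r])) fun ε hε => ?_
  have := hbelow ε hε r hr t ht
  simp only [barrier] at this
  linarith

theorem upper_bound (hu : IsClassicalSolutionOn N T u ur urr ut u0) (hN : 1 ≤ N) {M0 : ℝ}
    (hu0 : ∀ r ∈ Icc (0:ℝ) 1, u0 r ≤ M0) :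
    ∀ r ∈ Icc (0:ℝ) 1, ∀ t ∈ Icc 0 T,
      u r t ≤ max M0 1 * exp (r ^ 2 / 2 + (N : ℝ) * t) := by
  set M := max M0 1
  set lam := 12 * (M * exp (1 / 2 + N * T)) + 8 * N + 1
  have habove : ∀ ε > 0, ∀ r ∈ Icc (0:ℝ) 1, ∀ t ∈ Icc 0 T,
      u r t < barrier M N lam ε r t := by
    intro ε hε
    obtain ⟨wr, wrr, wt, hw⟩ :=
      isStrictSupersolutionOn_barrier (T := T) hN (le_max_right M0 1) hε (lt_add_one _)
    refine hu.lt_of_isStrictSupersolutionOn hw fun r hr => ?_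
    have hinit : M0 ≤ M * exp (r ^ 2 / 2 + N * 0) :=
      (le_max_left M0 1).trans (le_mul_of_one_le_right (zero_le_one.trans (le_max_right M0 1))
        (one_le_exp (by positivity)))
    simp only [barrier, mul_zero, exp_zero, mul_one] at hinit ⊢
    nlinarith [hu0 r hr, half_le_two_mul_sq_sub_add_one r]
  intro r hr t ht
  refine le_of_forall_pos_lt_add_mul (c := exp (lam * t) * (2 * r ^ 2 - r + 1))
    (mul_pos (exp_pos _) (by linarith [half_le_two_mul_sq_sub_add_one r])) fun ε hε => ?_
  have := habove ε hε r hr t ht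
  simp only [barrier] at this
  linarith

end IsClassicalSolutionOn

theorem apriori_u_bounds_general (N : ℕ) (hN : 2 ≤ N) (T : ℝ)
    (u0 : ℝ → ℝ) (m0 M0 : ℝ) (hm0 : 0 < m0)
    (hu0 : ∀ r ∈ Icc (0:ℝ) 1, m0 ≤ u0 r ∧ u0 r ≤ M0)
    (u ur urr ut : ℝ → ℝ → ℝ) (hu : IsClassicalSolutionOn N T u ur urr ut u0) :
    (∀ r ∈ Icc (0:ℝ) 1, ∀ t ∈ Icc (0:ℝ) T,
      m0 * Real.exp ((r ^ 2 - 1) / 2 + ((N : ℝ) - 1) * t) ≤ u r t ∧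
      u r t ≤ max M0 1 * Real.exp (r ^ 2 / 2 + (N : ℝ) * t)) ∧
    ∃ C1 > (0:ℝ), ∃ C2 > (0:ℝ), ∀ r ∈ Icc (0:ℝ) 1, ∀ t ∈ Icc (0:ℝ) T,
      C1 * Real.exp (((N : ℝ) - 1) * t) ≤ u r t ∧ u r t ≤ C2 * Real.exp ((N : ℝ) * t) := by
  have hN1 : 1 ≤ N := by omega
  have hlower := hu.lower_bound hN1 hm0.le fun r hr => (hu0 r hr).1
  have hupper := hu.upper_bound hN1 fun r hr => (hu0 r hr).2
  refine ⟨fun r hr t ht => ⟨hlower r hr t ht, hupper r hr t ht⟩,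
    m0 * exp (-1 / 2), by positivity, max M0 1 * exp (1 / 2), by positivity,
    fun r hr t ht => ⟨?_, ?_⟩⟩
  · calc m0 * exp (-1 / 2) * exp (((N : ℝ) - 1) * t)
        = m0 * exp ((0 - 1) / 2 + ((N : ℝ) - 1) * t) := by rw [mul_assoc, ← exp_add]; ring_nf
      _ ≤ m0 * exp ((r ^ 2 - 1) / 2 + ((N : ℝ) - 1) * t) := by gcongr; positivity
      _ ≤ u r t := hlower r hr t ht
  · calc u r t ≤ max M0 1 * exp (r ^ 2 / 2 + (N : ℝ) * t) := hupper r hr t ht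
      _ ≤ max M0 1 * exp (1 / 2 + (N : ℝ) * t) := by gcongr; nlinarith [hr.1, hr.2]
      _ = max M0 1 * exp (1 / 2) * exp ((N : ℝ) * t) := by rw [mul_assoc, ← exp_add]

/-- a priori `L^∞` bounds: for a classical solution on `[0,1] × [0,T]` with
`0 < m0 ≤ u0 ≤ M0`, one has `m0 e^{(r²-1)/2 + (N-1)t} ≤ u(r,t) ≤ max(M0,1) e^{r²/2 + Nt}`;
in particular `C1 e^{(N-1)t} ≤ u ≤ C2 e^{Nt}` for constants `C1, C2 > 0`. -/
theorem apriori_u_bounds (N : ℕ) (hN : 2 ≤ N) (T : ℝ) (hT : 0 < T)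
    (u0 : ℝ → ℝ) (m0 M0 : ℝ) (hm0 : 0 < m0)
    (hu0c : ContinuousOn u0 (Icc 0 1))
    (hu0 : ∀ r ∈ Icc (0:ℝ) 1, m0 ≤ u0 r ∧ u0 r ≤ M0)
    (u ur urr ut : ℝ → ℝ → ℝ) (hu : IsClassicalSolutionOn N T u ur urr ut u0) :
    (∀ r ∈ Icc (0:ℝ) 1, ∀ t ∈ Icc (0:ℝ) T,
      m0 * Real.exp ((r ^ 2 - 1) / 2 + ((N : ℝ) - 1) * t) ≤ u r t ∧
      u r t ≤ max M0 1 * Real.exp (r ^ 2 / 2 + (N : ℝ) * t)) ∧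
    ∃ C1 > (0:ℝ), ∃ C2 > (0:ℝ), ∀ r ∈ Icc (0:ℝ) 1, ∀ t ∈ Icc (0:ℝ) T,
      C1 * Real.exp (((N : ℝ) - 1) * t) ≤ u r t ∧ u r t ≤ C2 * Real.exp ((N : ℝ) * t) :=
  apriori_u_bounds_general N hN T u0 m0 M0 hm0 hu0 u ur urr ut hu
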